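/- arXiv:1801.05493 — 11 statements merged into one kernel-verified Lean document; each statement's English description precedes it below -/
import Mathlib

section
/- Let 𝒜 and ℬ be abelian categories, where ℬ has enough projectives. Let f_! : ℬ ⥤ 𝒜 and f^* : 𝒜 ⥤ ℬ be functors with an adjunction f_! ⊣ f^*, where f^* is faithful and exact, and let L : 𝒜 ⥤ ℬ be a functor with an adjunction L ⊣ f_!. Let 𝒳 be a class of objects of 𝒜 that is closed under extensions and direct summands, contains f_!(B) for every object B of ℬ, such that for every X ∈ 𝒳 there exists a short exact sequence 0 → X'' → f_!(B') → X → 0 with X'' ∈ 𝒳, and such that L is exact on 𝒳. Let 𝓕 be a class of objects of ℬ that contains all projective objects of ℬ and is closed under kernels of epimorphisms (i.e. for every short exact sequence 0 → B₃ → B₂ → B₁ → 0 in ℬ with B₁, B₂ ∈ 𝓕, also B₃ ∈ 𝓕). Then for every object A of 𝒜 with A ∈ 𝒳 and L(A) ∈ 𝓕, there exist a projective object Q of 𝒜 and an epimorphism p : Q → A such that the kernel K of p satisfies K ∈ 𝒳 and L(K) ∈ 𝓕. -/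
open CategoryTheory Category Limits

/-- A class of objects in an abelian category is closed under extensions if for every
short exact sequence `0 → A' → A → A'' → 0` with `A', A''` in the class, also `A` is. -/
def ClosedUnderExtensions {C : Type*} [Category C] [Abelian C] (X : Set C) : Prop :=
  ∀ (S : ShortComplex C), S.ShortExact → S.X₁ ∈ X → S.X₃ ∈ X → S.X₂ ∈ X

/-- A class of objects is closed under direct summands if every retract of an object of
the class belongs to the class. -/
def ClosedUnderDirectSummands {C : Type*} [Category C] [Abelian C] (X : Set C) : Prop :=
  ∀ (A B : C) (i : A ⟶ B) (r : B ⟶ A), i ≫ r = 𝟙 A → B ∈ X → A ∈ X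

/-- A functor `L` is exact on a class `X` if for every short exact sequence
`0 → A₁ → A₂ → A₃ → 0` with `A₃ ∈ X`, the sequence `0 → L(A₁) → L(A₂) → L(A₃) → 0`
is exact. -/
def ExactOnClass {C D : Type*} [Category C] [Abelian C] [Category D] [Abelian D]
    (L : C ⥤ D) (X : Set C) : Prop :=
  ∀ (S : ShortComplex C), S.ShortExact → S.X₃ ∈ X →
    ∃ (w : L.map S.f ≫ L.map S.g = 0),
      (ShortComplex.mk (L.map S.f) (L.map S.g) w).ShortExact



section Helpers
open CategoryTheory.Abelian Pseudoelement

variable {C : Type*} [Category C] [Abelian C]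

lemma shortExact_of_epi' {X Y : C} (g : X ⟶ Y) [Epi g] :
    (ShortComplex.mk (kernel.ι g) g (kernel.condition g)).ShortExact :=
  ShortComplex.ShortExact.mk'
    (ShortComplex.exact_of_f_is_kernel _ (kernelIsKernel g)) inferInstance inferInstance

lemma pseudo_ker' {X Y : C} (h : X ⟶ Y) (b : Pseudoelement X)
    (hb : pseudoApply h b = 0) :
    ∃ a : Pseudoelement (kernel h), pseudoApply (kernel.ι h) a = b :=
  pseudo_exact_of_exact (S := ShortComplex.mk (kernel.ι h) h (kernel.condition h))
    (ShortComplex.exact_of_f_is_kernel _ (kernelIsKernel h)) b hb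

lemma kernelCompSES {X Y Z : C} (f : X ⟶ Y) (g : Y ⟶ Z) [Epi f] :
    ∃ (w : kernel.lift (f ≫ g) (kernel.ι f) (by simp) ≫
        kernel.lift g (kernel.ι (f ≫ g) ≫ f) (by rw [Category.assoc, kernel.condition]) = 0),
      (ShortComplex.mk _ _ w).ShortExact := by
  set μ : kernel f ⟶ kernel (f ≫ g) := kernel.lift (f ≫ g) (kernel.ι f) (by simp) with hμ
  set δ : kernel (f ≫ g) ⟶ kernel g :=
    kernel.lift g (kernel.ι (f ≫ g) ≫ f) (by rw [Category.assoc, kernel.condition]) with hδ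
  have hμι : μ ≫ kernel.ι (f ≫ g) = kernel.ι f := kernel.lift_ι _ _ _
  have hδι : δ ≫ kernel.ι g = kernel.ι (f ≫ g) ≫ f := kernel.lift_ι _ _ _
  have w : μ ≫ δ = 0 := by
    rw [← cancel_mono (kernel.ι g)]
    rw [Category.assoc, hδι, ← Category.assoc, hμι, kernel.condition, zero_comp]
  refine ⟨w, ?_⟩
  have hmono : Mono μ := mono_of_mono_fac hμι
  have hepi : Epi δ := by
    apply epi_of_pseudo_surjective
    intro y
    obtain ⟨x', hx'⟩ := pseudo_surjective_of_epi f (pseudoApply (kernel.ι g) y)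
    have h0 : pseudoApply (kernel.ι g ≫ g) y = 0 := by
      rw [kernel.condition]; exact zero_apply _ y
    have h1 : pseudoApply (f ≫ g) x' = 0 := by
      rw [Pseudoelement.comp_apply, hx', ← Pseudoelement.comp_apply, h0]
    obtain ⟨x, hx⟩ := pseudo_ker' (f ≫ g) x' h1
    refine ⟨x, pseudo_injective_of_mono (kernel.ι g) ?_⟩
    rw [← Pseudoelement.comp_apply, hδι, Pseudoelement.comp_apply, hx, hx']
  refine ShortComplex.ShortExact.mk' ?_ hmono hepi
  apply exact_of_pseudo_exact
  intro b hb
  have h2 : pseudoApply f (pseudoApply (kernel.ι (f ≫ g)) b) = 0 := by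
    rw [← Pseudoelement.comp_apply, ← hδι, Pseudoelement.comp_apply]
    change pseudoApply (kernel.ι g) (pseudoApply δ b) = 0
    rw [show pseudoApply δ b = 0 from hb, apply_zero]
  obtain ⟨a, ha⟩ := pseudo_ker' f _ h2
  refine ⟨a, pseudo_injective_of_mono (kernel.ι (f ≫ g)) ?_⟩
  rw [← Pseudoelement.comp_apply, hμι, ha]

end Helpers

/-- Lemma 3.10 (Lemma:14) of the paper: every `A` with `A ∈ 𝒳` and `L(A) ∈ 𝓕` admits an
epimorphism `p : Q → A` from a projective object of `𝒜` whose kernel `K` satisfies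
`K ∈ 𝒳` and `L(K) ∈ 𝓕`. -/
theorem stmt_1 {𝒜 : Type*} [Category 𝒜] [Abelian 𝒜] {ℬ : Type*} [Category ℬ] [Abelian ℬ]
    [EnoughProjectives ℬ]
    (f_shriek : ℬ ⥤ 𝒜) (f_star : 𝒜 ⥤ ℬ) (adj₁ : f_shriek ⊣ f_star)
    [f_star.Faithful] [PreservesFiniteLimits f_star] [PreservesFiniteColimits f_star]
    (L : 𝒜 ⥤ ℬ) (adj₂ : L ⊣ f_shriek)
    (𝒳 : Set 𝒜)
    (hXext : ClosedUnderExtensions 𝒳) (hXsum : ClosedUnderDirectSummands 𝒳)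
    (hXP : ∀ B : ℬ, f_shriek.obj B ∈ 𝒳)
    (hXres : ∀ X ∈ 𝒳, ∃ (B' : ℬ) (X'' : 𝒜) (i : X'' ⟶ f_shriek.obj B')
      (p : f_shriek.obj B' ⟶ X) (w : i ≫ p = 0),
      X'' ∈ 𝒳 ∧ (ShortComplex.mk i p w).ShortExact)
    (hLX : ExactOnClass L 𝒳)
    (𝓕 : Set ℬ)
    (hFproj : ∀ Q : ℬ, Projective Q → Q ∈ 𝓕)
    (hFker : ∀ (S : ShortComplex ℬ), S.ShortExact → S.X₂ ∈ 𝓕 → S.X₃ ∈ 𝓕 → S.X₁ ∈ 𝓕)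
    (A : 𝒜) (hA₁ : A ∈ 𝒳) (hA₂ : L.obj A ∈ 𝓕) :
    ∃ (Q : 𝒜) (p : Q ⟶ A), Projective Q ∧ Epi p ∧
      kernel p ∈ 𝒳 ∧ L.obj (kernel p) ∈ 𝓕 := by
  haveI := adj₁.leftAdjoint_preservesColimits
  haveI := adj₂.rightAdjoint_preservesLimits
  haveI := adj₂.leftAdjoint_preservesColimits
  obtain ⟨B', X'', i, p', w', hX'', hSE⟩ := hXres A hA₁
  set P := Projective.over B' with hP
  set e : P ⟶ B' := Projective.π B' with he
  haveI : Epi p' := hSE.epi_g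
  haveI : Epi (f_shriek.map e) := inferInstance
  set p : f_shriek.obj P ⟶ A := f_shriek.map e ≫ p' with hp
  haveI hpe : Epi p := epi_comp _ _
  refine ⟨f_shriek.obj P, p, adj₁.map_projective _ (Projective.projective_over _), hpe, ?_, ?_⟩
  · -- kernel p ∈ 𝒳
    have h₁ : kernel (f_shriek.map e) ∈ 𝒳 := by
      have hc : IsIso (kernelComparison e f_shriek) := inferInstance
      exact hXsum _ _ (inv (kernelComparison e f_shriek)) (kernelComparison e f_shriek)
        (by simp) (hXP (kernel e))
    have h₃ : kernel p' ∈ 𝒳 := by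
      have iso : X'' ≅ kernel p' :=
        IsLimit.conePointUniqueUpToIso hSE.fIsKernel (limit.isLimit _)
      exact hXsum _ _ iso.inv iso.hom iso.inv_hom_id hX''
    obtain ⟨w, hW⟩ := kernelCompSES (f_shriek.map e) p'
    exact hXext _ hW h₁ h₃
  · -- L.obj (kernel p) ∈ 𝓕
    obtain ⟨w₂, hLT⟩ := hLX (ShortComplex.mk (kernel.ι p) p (kernel.condition p))
      (shortExact_of_epi' p) hA₁
    exact hFker _ hLT (hFproj _ (adj₂.map_projective _
      (adj₁.map_projective _ (Projective.projective_over _)))) hA₂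
end

section
/- Let 𝒜 and ℬ be abelian categories. Let f_! : ℬ ⥤ 𝒜 and f^* : 𝒜 ⥤ ℬ be functors with an adjunction f_! ⊣ f^*, where f^* is exact, and let L : 𝒜 ⥤ ℬ be a functor with an adjunction L ⊣ f_!. Let 𝒳 be a class of objects of 𝒜 that is closed under extensions and direct summands, contains f_!(B) for every object B of ℬ, such that for every X ∈ 𝒳 there exists a short exact sequence 0 → X → f_!(B) → X' → 0 with X' ∈ 𝒳, and such that L is exact on 𝒳. Let 𝓕 be a class of objects of ℬ that is closed under extensions and direct summands, contains all projective objects of ℬ, and such that for every F ∈ 𝓕 there exists a short exact sequence 0 → F → Q' → F'' → 0 with Q' projective in ℬ and F'' ∈ 𝓕. Then for every object A of 𝒜 with A ∈ 𝒳 and L(A) ∈ 𝓕, there exist a projective object Q of 𝒜 and a monomorphism j : A → Q such that the cokernel C of j satisfies C ∈ 𝒳 and L(C) ∈ 𝓕. -/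
open CategoryTheory Category Limits

section Aux

variable {C : Type*} [Category C] [Abelian C]

/-- Key pushout lemma: given `f : X ⟶ Y`, a mono `g : X ⟶ Z` with a retraction-style
factorization `f ≫ r = g`, a cokernel `cg` of `g` and a cokernel `cf` of `f`, the pushout `P`
of `f` and `g` sits in a short exact sequence `0 → Y → P → W → 0` and the cokernel object `V`
of `f` is a retract of `P`. -/
lemma pushout_key {X Y Z W V : C} (f : X ⟶ Y) (g : X ⟶ Z) [Mono g]
    (r : Y ⟶ Z) (hr : f ≫ r = g)
    (cg : Z ⟶ W) (hwg : g ≫ cg = 0) [Epi cg] (hcg : IsColimit (CokernelCofork.ofπ cg hwg))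
    (cf : Y ⟶ V) (hwf : f ≫ cf = 0) [Epi cf] (hcf : IsColimit (CokernelCofork.ofπ cf hwf)) :
    ∃ (P : C) (a : Y ⟶ P) (d : P ⟶ W) (w0 : a ≫ d = 0) (s : V ⟶ P) (t : P ⟶ V),
      (ShortComplex.mk a d w0).ShortExact ∧ s ≫ t = 𝟙 V := by
  let P := pushout f g
  let a : Y ⟶ P := pushout.inl f g
  have ha : Mono a := by dsimp [a, P]; infer_instance
  let d : P ⟶ W := pushout.desc 0 cg (by rw [comp_zero, hwg])
  have hinl : a ≫ d = 0 := by exact pushout.inl_desc _ _ _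
  have hinr : pushout.inr f g ≫ d = cg := by exact pushout.inr_desc _ _ _
  have hepid : Epi d := epi_of_epi_fac hinr
  -- d is a cokernel of a
  have hd : IsColimit (CokernelCofork.ofπ d hinl) := by
    refine CokernelCofork.IsColimit.ofπ' d hinl (fun {T} k hk => ?_)
    have hgk : g ≫ (pushout.inr f g ≫ k) = 0 := by
      rw [← assoc, ← pushout.condition, assoc, hk, comp_zero]
    obtain ⟨l, hl⟩ := CokernelCofork.IsColimit.desc' hcg (pushout.inr f g ≫ k) hgk
    refine ⟨l, ?_⟩
    apply pushout.hom_ext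
    · simp only [← assoc]
      rw [show pushout.inl f g ≫ d = 0 from hinl, zero_comp, hk]
    · simp only [← assoc]
      rw [hinr]; exact hl
  -- the retraction onto V
  let ρ : P ⟶ Z := pushout.desc r (𝟙 Z) (by rw [hr, comp_id])
  have hρ : pushout.inr f g ≫ ρ = 𝟙 Z := by exact pushout.inr_desc _ _ _
  let t : P ⟶ V := pushout.desc cf 0 (by rw [hwf, comp_zero])
  have hinl' : a ≫ t = cf := by exact pushout.inl_desc _ _ _
  have hinr' : pushout.inr f g ≫ t = 0 := by exact pushout.inr_desc _ _ _
  have hepit : Epi t := epi_of_epi_fac hinl'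
  have ht : IsColimit (CokernelCofork.ofπ t hinr') := by
    refine CokernelCofork.IsColimit.ofπ' t hinr' (fun {T} k hk => ?_)
    have hfk : f ≫ (pushout.inl f g ≫ k) = 0 := by
      rw [← assoc, pushout.condition, assoc, hk, comp_zero]
    obtain ⟨l, hl⟩ := CokernelCofork.IsColimit.desc' hcf (pushout.inl f g ≫ k) hfk
    refine ⟨l, ?_⟩
    apply pushout.hom_ext
    · simp only [← assoc]
      rw [hinl']; exact hl
    · simp only [← assoc]
      rw [hinr', zero_comp, hk]
  obtain ⟨s, hs⟩ := CokernelCofork.IsColimit.desc' ht (𝟙 P - ρ ≫ pushout.inr f g)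
    (by rw [Preadditive.comp_sub, comp_id, ← assoc, hρ, id_comp, sub_self])
  have hst : s ≫ t = 𝟙 V := by
    simp only [Cofork.π_ofπ] at hs
    rw [← cancel_epi t, ← assoc, hs, Preadditive.sub_comp, id_comp, assoc, hinr',
      comp_zero, sub_zero, comp_id]
  refine ⟨P, a, d, hinl, s, t, ?_, hst⟩
  have := ha
  exact ShortComplex.ShortExact.mk'
    (ShortComplex.exact_of_g_is_cokernel _ hd) ha hepid

/-- If `f : X ⟶ Y` and `g : Y ⟶ Z` are monos and `cg` is a cokernel of `g`, then there is a
short exact sequence `0 → cokernel f → cokernel (f ≫ g) → W → 0`. -/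
lemma comp_mono_shortExact {X Y Z W : C} (f : X ⟶ Y) (g : Y ⟶ Z) [Mono f] [Mono g]
    (cg : Z ⟶ W) (hwg : g ≫ cg = 0) [Epi cg] (hcg : IsColimit (CokernelCofork.ofπ cg hwg)) :
    ∃ (α : cokernel f ⟶ cokernel (f ≫ g)) (β : cokernel (f ≫ g) ⟶ W) (w : α ≫ β = 0),
      (ShortComplex.mk α β w).ShortExact := by
  have hfg : Mono (f ≫ g) := mono_comp f g
  let α : cokernel f ⟶ cokernel (f ≫ g) :=
    cokernel.map f (f ≫ g) (𝟙 X) g (by rw [id_comp])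
  have hπα : cokernel.π f ≫ α = g ≫ cokernel.π (f ≫ g) := by simp [α]
  let β : cokernel (f ≫ g) ⟶ W :=
    cokernel.desc (f ≫ g) cg (by rw [assoc, hwg, comp_zero])
  have hπβ : cokernel.π (f ≫ g) ≫ β = cg := by simp [β]
  have hw : α ≫ β = 0 := by
    rw [← cancel_epi (cokernel.π f), ← assoc, hπα, assoc, hπβ, hwg, comp_zero]
  -- f ≫ g is the kernel of its cokernel projection
  have Sfg : (ShortComplex.mk (f ≫ g) (cokernel.π (f ≫ g))
      (cokernel.condition _)).ShortExact :=
    ShortComplex.ShortExact.mk'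
      (ShortComplex.exact_of_g_is_cokernel _ (cokernelIsCokernel (f ≫ g))) hfg inferInstance
  have hkerfg := Sfg.exact.fIsKernel
  -- g is the kernel of cg
  have Sg : (ShortComplex.mk g cg hwg).ShortExact :=
    ShortComplex.ShortExact.mk' (ShortComplex.exact_of_g_is_cokernel _ hcg)
      inferInstance inferInstance
  have hkerg := Sg.exact.fIsKernel
  have hmonoα : Mono α := by
    rw [Preadditive.mono_iff_cancel_zero]
    intro T x hx
    obtain ⟨T', π, hπ, y, hy⟩ := surjective_up_to_refinements_of_epi (cokernel.π f) x
    have h1 : (y ≫ g) ≫ cokernel.π (f ≫ g) = 0 := by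
      rw [assoc, ← hπα, ← assoc, ← hy, assoc, hx, comp_zero]
    obtain ⟨z, hz⟩ := KernelFork.IsLimit.lift' hkerfg (y ≫ g) h1
    dsimp at hz
    have hyz : y = z ≫ f := by
      have : (y - z ≫ f) ≫ g = 0 := by
        rw [Preadditive.sub_comp, assoc, hz, sub_self]
      have := (Preadditive.mono_iff_cancel_zero g).1 inferInstance _ _ this
      rwa [sub_eq_zero] at this
    have : π ≫ x = 0 := by
      rw [hy, hyz, assoc, cokernel.condition, comp_zero]
    rw [← cancel_epi π, this, comp_zero]
  have hepiβ : Epi β := epi_of_epi_fac hπβ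
  have hexact : (ShortComplex.mk α β hw).Exact := by
    rw [ShortComplex.exact_iff_exact_up_to_refinements]
    intro T x₂ hx₂
    obtain ⟨T', π, hπ, y, hy⟩ :=
      surjective_up_to_refinements_of_epi (cokernel.π (f ≫ g)) x₂
    have h1 : y ≫ cg = 0 := by
      rw [← hπβ, ← assoc, ← hy, assoc]
      dsimp at hx₂ ⊢
      rw [hx₂, comp_zero]
    obtain ⟨z, hz⟩ := KernelFork.IsLimit.lift' hkerg y h1
    dsimp at hz
    refine ⟨T', π, hπ, z ≫ cokernel.π f, ?_⟩
    dsimp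
    rw [assoc, hπα, ← assoc, hz, ← hy]
  exact ⟨α, β, hw, ShortComplex.ShortExact.mk' hexact hmonoα hepiβ⟩

end Aux

/-- Lemma 3.12 (Lemma:16) of the paper: every `A` with `A ∈ 𝒳` and `L(A) ∈ 𝓕` admits a
monomorphism `j : A → Q` into a projective object of `𝒜` whose cokernel `C` satisfies
`C ∈ 𝒳` and `L(C) ∈ 𝓕`. -/
theorem stmt_2 {𝒜 : Type*} [Category 𝒜] [Abelian 𝒜] {ℬ : Type*} [Category ℬ] [Abelian ℬ]
    (f_shriek : ℬ ⥤ 𝒜) (f_star : 𝒜 ⥤ ℬ) (adj₁ : f_shriek ⊣ f_star)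
    [PreservesFiniteLimits f_star] [PreservesFiniteColimits f_star]
    (L : 𝒜 ⥤ ℬ) (adj₂ : L ⊣ f_shriek)
    (𝒳 : Set 𝒜)
    (hXext : ClosedUnderExtensions 𝒳) (hXsum : ClosedUnderDirectSummands 𝒳)
    (hXP : ∀ B : ℬ, f_shriek.obj B ∈ 𝒳)
    (hXcores : ∀ X ∈ 𝒳, ∃ (B : ℬ) (X' : 𝒜) (i : X ⟶ f_shriek.obj B)
      (p : f_shriek.obj B ⟶ X') (w : i ≫ p = 0),
      X' ∈ 𝒳 ∧ (ShortComplex.mk i p w).ShortExact)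
    (hLX : ExactOnClass L 𝒳)
    (𝓕 : Set ℬ)
    (hFext : ClosedUnderExtensions 𝓕) (hFsum : ClosedUnderDirectSummands 𝓕)
    (hFproj : ∀ Q : ℬ, Projective Q → Q ∈ 𝓕)
    (hFcores : ∀ F ∈ 𝓕, ∃ (Q' : ℬ) (F'' : ℬ) (i : F ⟶ Q') (p : Q' ⟶ F'') (w : i ≫ p = 0),
      Projective Q' ∧ F'' ∈ 𝓕 ∧ (ShortComplex.mk i p w).ShortExact)
    (A : 𝒜) (hA₁ : A ∈ 𝒳) (hA₂ : L.obj A ∈ 𝓕) :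
    ∃ (Q : 𝒜) (j : A ⟶ Q), Projective Q ∧ Mono j ∧
      cokernel j ∈ 𝒳 ∧ L.obj (cokernel j) ∈ 𝓕 := by
  -- basic instances
  haveI : PreservesColimitsOfSize.{0, 0} f_shriek := adj₁.leftAdjoint_preservesColimits
  haveI : PreservesLimitsOfSize.{0, 0} f_shriek := adj₂.rightAdjoint_preservesLimits
  haveI : f_shriek.IsLeftAdjoint := adj₁.isLeftAdjoint
  -- data
  obtain ⟨B, X', i, q, w₁, hX', hS₁⟩ := hXcores A hA₁
  obtain ⟨Q', F'', u, p, w₂, hQ'proj, hF'', hS₂⟩ := hFcores (L.obj A) hA₂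
  haveI := hS₁.mono_f
  haveI := hS₁.epi_g
  haveI := hS₂.mono_f
  haveI := hS₂.epi_g
  -- the unit of adj₂ at A is a mono
  let η : A ⟶ f_shriek.obj (L.obj A) := adj₂.unit.app A
  have hnat : η ≫ f_shriek.map (L.map i) = i ≫ adj₂.unit.app (f_shriek.obj B) := by
    have := adj₂.unit.naturality i
    simpa [η] using this.symm
  haveI : IsSplitMono (adj₂.unit.app (f_shriek.obj B)) :=
    IsSplitMono.mk' ⟨f_shriek.map (adj₂.counit.app B), adj₂.right_triangle_components B⟩
  have hmonoη : Mono η := by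
    have : Mono (η ≫ f_shriek.map (L.map i)) := by rw [hnat]; exact mono_comp _ _
    exact mono_of_mono η (f_shriek.map (L.map i))
  -- the embedding j
  haveI : Mono (f_shriek.map u) := f_shriek.map_mono u
  haveI : Epi (f_shriek.map p) := f_shriek.map_epi p
  let j : A ⟶ f_shriek.obj Q' := η ≫ f_shriek.map u
  haveI hmonoj : Mono j := mono_comp _ _
  -- Q := f_shriek.obj Q' is projective
  have hQproj : Projective (f_shriek.obj Q') := adj₁.map_projective Q' hQ'proj
  -- the image of the short exact sequence S₂ under f_shriek
  have hw₃ : f_shriek.map u ≫ f_shriek.map p = 0 := by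
    rw [← f_shriek.map_comp, w₂, f_shriek.map_zero]
  have hcg₃ : IsColimit (CokernelCofork.ofπ (f_shriek.map p) hw₃) := by
    have := CokernelCofork.mapIsColimit _ hS₂.exact.gIsCokernel f_shriek
    exact IsColimit.ofIsoColimit this (Cocones.ext (Iso.refl _) (by rintro (_|_) <;> simp <;> erw [comp_id] <;> rfl))
  -- Step 1: cokernel η ∈ 𝒳 via the pushout of η and i
  have hr₁ : η ≫ f_shriek.map (L.map i ≫ adj₂.counit.app B) = i := by
    rw [f_shriek.map_comp, ← assoc, hnat, assoc, adj₂.right_triangle_components, comp_id]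
  obtain ⟨P, a, d, w0, s, t, hSES_P, hst⟩ :=
    pushout_key η i (f_shriek.map (L.map i ≫ adj₂.counit.app B)) hr₁
      q w₁ hS₁.exact.gIsCokernel
      (cokernel.π η) (cokernel.condition η) (cokernelIsCokernel η)
  have hP : P ∈ 𝒳 := hXext _ hSES_P (hXP (L.obj A)) hX'
  have hcokerη : cokernel η ∈ 𝒳 := hXsum _ P s t hst hP
  -- Step 2: cokernel j ∈ 𝒳 via the composite mono short exact sequence
  obtain ⟨α, β, wαβ, hSESαβ⟩ := comp_mono_shortExact η (f_shriek.map u)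
    (f_shriek.map p) hw₃ hcg₃
  have hC : cokernel j ∈ 𝒳 := hXext _ hSESαβ hcokerη (hXP F'')
  -- Step 3: L applied to 0 → A → f_!Q' → cokernel j → 0
  have hSC : (ShortComplex.mk j (cokernel.π j) (cokernel.condition j)).ShortExact :=
    ShortComplex.ShortExact.mk'
      (ShortComplex.exact_of_g_is_cokernel _ (cokernelIsCokernel j)) hmonoj inferInstance
  obtain ⟨w', hSE'⟩ := hLX _ hSC hC
  haveI := hSE'.epi_g
  -- Step 4: L(cokernel j) ∈ 𝓕 via the pushout of L j and u
  have hr₂ : L.map j ≫ adj₂.counit.app Q' = u := by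
    have hnat₂ := adj₂.counit.naturality u
    dsimp at hnat₂
    rw [show L.map j = L.map η ≫ L.map (f_shriek.map u) by rw [← L.map_comp],
      assoc, hnat₂, ← assoc]
    simp [η]
  obtain ⟨P₂, a₂, d₂, w0₂, s₂, t₂, hSES_P₂, hst₂⟩ :=
    pushout_key (L.map j) u (adj₂.counit.app Q') hr₂
      p w₂ hS₂.exact.gIsCokernel
      (L.map (cokernel.π j)) w' hSE'.exact.gIsCokernel
  have hLQproj : Projective (L.obj (f_shriek.obj Q')) :=
    adj₂.map_projective _ hQproj
  have hP₂ : P₂ ∈ 𝓕 := hFext _ hSES_P₂ (hFproj _ hLQproj) hF''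
  have hLC : L.obj (cokernel j) ∈ 𝓕 := hFsum _ P₂ s₂ t₂ hst₂ hP₂
  exact ⟨f_shriek.obj Q', j, hQproj, hmonoj, hC, hLC⟩
end

section
/- Let 𝒜 and ℬ be abelian categories and let L : 𝒜 ⥤ ℬ be an additive functor. Let 𝒳 be a class of objects of 𝒜 that is closed under extensions and such that L is exact on 𝒳, and let 𝓕 be a class of objects of ℬ that is closed under extensions. Then the class 𝒴 = { A : A ∈ 𝒳 and L(A) ∈ 𝓕 } is closed under extensions. Moreover, if in addition 𝒳 and 𝓕 are closed under direct summands, then 𝒴 is closed under direct summands. -/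
open CategoryTheory Category Limits

/-- Lemma 3.8 of the paper: if `𝒳` is closed under extensions and `L` is exact on `𝒳`,
and `𝓕` is closed under extensions, then `𝒴 = {A | A ∈ 𝒳 ∧ L(A) ∈ 𝓕}` is closed under
extensions; and if moreover `𝒳` and `𝓕` are closed under direct summands, so is `𝒴`. -/
theorem stmt_4 {𝒜 : Type*} [Category 𝒜] [Abelian 𝒜] {ℬ : Type*} [Category ℬ] [Abelian ℬ]
    (L : 𝒜 ⥤ ℬ) [L.Additive] (𝒳 : Set 𝒜) (𝓕 : Set ℬ)
    (hXext : ClosedUnderExtensions 𝒳) (hLX : ExactOnClass L 𝒳)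
    (hFext : ClosedUnderExtensions 𝓕) :
    ClosedUnderExtensions {A : 𝒜 | A ∈ 𝒳 ∧ L.obj A ∈ 𝓕} ∧
    (ClosedUnderDirectSummands 𝒳 → ClosedUnderDirectSummands 𝓕 →
      ClosedUnderDirectSummands {A : 𝒜 | A ∈ 𝒳 ∧ L.obj A ∈ 𝓕}) := by
  constructor
  · intro S hS h1 h3
    have hX2 : S.X₂ ∈ 𝒳 := hXext S hS h1.1 h3.1
    obtain ⟨w, hLS⟩ := hLX S hS h3.1
    exact ⟨hX2, hFext _ hLS h1.2 h3.2⟩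
  · intro hXs hFs A B i r hir hB
    refine ⟨hXs A B i r hir hB.1, hFs (L.obj A) (L.obj B) (L.map i) (L.map r) ?_ hB.2⟩
    rw [← L.map_comp, hir, L.map_id]
end

section
/- Let 𝒜 and ℬ be abelian categories. Let f_! : ℬ ⥤ 𝒜 and f^* : 𝒜 ⥤ ℬ be functors with an adjunction f_! ⊣ f^*, where f^* preserves epimorphisms, and let L : 𝒜 ⥤ ℬ be a functor with an adjunction L ⊣ f_!. Then for every projective object Q of ℬ, the object L(f_!(Q)) is projective in ℬ. -/
open CategoryTheory Category Limits

/-- The key claim in the proof of Lemma 3.9 (Lemma:13) of the paper: given adjunctions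
`f_! ⊣ f^*` (with `f^*` preserving epimorphisms) and `L ⊣ f_!`, for every projective
object `Q` of `ℬ`, the object `L(f_!(Q))` is projective in `ℬ`. -/
theorem stmt_5 {𝒜 : Type*} [Category 𝒜] [Abelian 𝒜] {ℬ : Type*} [Category ℬ] [Abelian ℬ]
    (f_shriek : ℬ ⥤ 𝒜) (f_star : 𝒜 ⥤ ℬ) (adj₁ : f_shriek ⊣ f_star)
    [f_star.PreservesEpimorphisms]
    (L : 𝒜 ⥤ ℬ) (adj₂ : L ⊣ f_shriek)
    (Q : ℬ) (hQ : Projective Q) :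
    Projective (L.obj (f_shriek.obj Q)) := by
  have : f_shriek.PreservesEpimorphisms := by
    have := adj₁.leftAdjoint_preservesColimits
    infer_instance
  exact adj₂.map_projective _ (adj₁.map_projective _ hQ)
end

section
/- Let 𝒜 and ℬ be abelian categories. Let f_! : ℬ ⥤ 𝒜 and L : 𝒜 ⥤ ℬ be functors with an adjunction L ⊣ f_!, with unit η : 1_𝒜 → L ⋙ f_!. Let 𝒳 be a class of objects of 𝒜 that is closed under extensions and direct summands, contains f_!(B) for every object B of ℬ, and such that for every X ∈ 𝒳 there exists a short exact sequence 0 → X → f_!(B) → X' → 0 with X' ∈ 𝒳. Then for every X ∈ 𝒳, the unit morphism η_X : X → f_!(L(X)) is a monomorphism and its cokernel lies in 𝒳. -/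
open CategoryTheory Category Limits

/-- Part (i) of Lemma 3.4 (Lemma:6) of the paper: for every `X ∈ 𝒳`, the unit morphism
`η_X : X ⟶ f_!(L(X))` of the adjunction `L ⊣ f_!` is a monomorphism and its cokernel
lies in `𝒳`. -/
theorem stmt_6 {𝒜 : Type*} [Category 𝒜] [Abelian 𝒜] {ℬ : Type*} [Category ℬ] [Abelian ℬ]
    (f_shriek : ℬ ⥤ 𝒜) (L : 𝒜 ⥤ ℬ) (adj : L ⊣ f_shriek)
    (𝒳 : Set 𝒜)
    (hXext : ClosedUnderExtensions 𝒳) (hXsum : ClosedUnderDirectSummands 𝒳)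
    (hXP : ∀ B : ℬ, f_shriek.obj B ∈ 𝒳)
    (hXcores : ∀ X ∈ 𝒳, ∃ (B : ℬ) (X' : 𝒜) (i : X ⟶ f_shriek.obj B)
      (p : f_shriek.obj B ⟶ X') (w : i ≫ p = 0),
      X' ∈ 𝒳 ∧ (ShortComplex.mk i p w).ShortExact)
    (X : 𝒜) (hX : X ∈ 𝒳) :
    Mono (adj.unit.app X) ∧ cokernel (adj.unit.app X) ∈ 𝒳 := by
  obtain ⟨B, X', i, p, w, hX', hSE⟩ := hXcores X hX
  set η : X ⟶ f_shriek.obj (L.obj X) := adj.unit.app X with hη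
  -- the map `g : f_! L X ⟶ f_! B` through which `i` factors
  set g : f_shriek.obj (L.obj X) ⟶ f_shriek.obj B :=
    f_shriek.map ((adj.homEquiv X B).symm i) with hg
  have hig : η ≫ g = i := by
    have := adj.homEquiv_unit (X := X) (Y := B) (f := (adj.homEquiv X B).symm i)
    rw [Equiv.apply_symm_apply] at this
    exact this.symm
  haveI : Mono i := hSE.mono_f
  haveI : Epi p := hSE.epi_g
  haveI hmono : Mono η := by
    haveI : Mono (η ≫ g) := by rw [hig]; infer_instance
    exact mono_of_mono η g
  refine ⟨hmono, ?_⟩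
  -- Form the pushout `Y` of `η` and `i`.
  set Y := pushout η i with hY
  set inl : f_shriek.obj (L.obj X) ⟶ Y := pushout.inl η i with hinl
  set inr : f_shriek.obj B ⟶ Y := pushout.inr η i with hinr
  have hsquare : η ≫ inl = i ≫ inr := pushout.condition
  -- the map `u : Y ⟶ X'`; claim: `u` is a cokernel of `inl`
  have hpz : η ≫ (0 : f_shriek.obj (L.obj X) ⟶ X') = i ≫ p := by simp [w]
  set u : Y ⟶ X' := pushout.desc 0 p hpz with hu
  have hinl_u : inl ≫ u = 0 := pushout.inl_desc _ _ _
  have hinr_u : inr ≫ u = p := pushout.inr_desc _ _ _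
  haveI : Mono inl := by infer_instance
  haveI : Epi u := by
    have : Epi (inr ≫ u) := by rw [hinr_u]; infer_instance
    exact epi_of_epi inr u
  -- `u` is a cokernel of `inl`
  have hcolim : IsColimit (CokernelCofork.ofπ u hinl_u) := by
    refine CokernelCofork.IsColimit.ofπ _ _
      (fun {Z} φ hφ => hSE.exact.desc (inr ≫ φ)
        (by rw [← assoc, ← hsquare, assoc, hφ, comp_zero]))
      (fun {Z} φ hφ => ?_) (fun {Z} φ hφ m hm => ?_)
    · apply pushout.hom_ext
      · rw [← assoc, hinl_u, zero_comp, hφ]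
      · rw [← assoc, hinr_u]
        exact hSE.exact.g_desc _ _
    · rw [← cancel_epi u, hm]
      symm
      apply pushout.hom_ext
      · rw [← assoc, hinl_u, zero_comp, hφ]
      · rw [← assoc, hinr_u]
        exact hSE.exact.g_desc _ _
  -- the short complex `0 → f_! L X → Y → X' → 0` is short exact
  have hSE2 : (ShortComplex.mk inl u hinl_u).ShortExact := by
    refine ⟨ShortComplex.exact_of_g_is_cokernel _ hcolim⟩
  -- hence `Y ∈ 𝒳`
  have hYmem : Y ∈ 𝒳 := hXext _ hSE2 (hXP (L.obj X)) hX'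
  -- the retraction `ρ : Y ⟶ f_! B` of `inr`
  have hρw : η ≫ g = i ≫ 𝟙 (f_shriek.obj B) := by rw [comp_id, hig]
  set ρ : Y ⟶ f_shriek.obj B := pushout.desc g (𝟙 _) hρw with hρ
  have hinrρ : inr ≫ ρ = 𝟙 _ := pushout.inr_desc _ _ _
  have hinlρ : inl ≫ ρ = g := pushout.inl_desc _ _ _
  -- the map `t : Y ⟶ cokernel η`
  have htw : η ≫ cokernel.π η = i ≫ (0 : f_shriek.obj B ⟶ cokernel η) := by simp
  set t : Y ⟶ cokernel η := pushout.desc (cokernel.π η) 0 htw with ht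
  have hinlt : inl ≫ t = cokernel.π η := pushout.inl_desc _ _ _
  have hinrt : inr ≫ t = 0 := pushout.inr_desc _ _ _
  -- the section `s : cokernel η ⟶ Y`
  have hsw : η ≫ inl ≫ (𝟙 Y - ρ ≫ inr) = 0 := by
    rw [← assoc, hsquare, assoc, Preadditive.comp_sub, comp_id, ← assoc, hinrρ, id_comp, sub_self,
      comp_zero]
  set s : cokernel η ⟶ Y := cokernel.desc η (inl ≫ (𝟙 Y - ρ ≫ inr)) hsw with hs
  have hπs : cokernel.π η ≫ s = inl ≫ (𝟙 Y - ρ ≫ inr) := cokernel.π_desc _ _ _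
  have hst : s ≫ t = 𝟙 (cokernel η) := by
    rw [← cancel_epi (cokernel.π η), ← assoc, hπs, comp_id, assoc, Preadditive.sub_comp,
      id_comp, Preadditive.comp_sub, assoc, hinrt, comp_zero, comp_zero, sub_zero, hinlt]
  exact hXsum _ Y s t hst hYmem
end

section
/- Let 𝒜 and ℬ be abelian categories. Let f_! : ℬ ⥤ 𝒜 and f^* : 𝒜 ⥤ ℬ be functors with an adjunction f_! ⊣ f^* with counit ε : f^* ⋙ f_! → 1_𝒜, and assume f^* is faithful. Let 𝒳 be a class of objects of 𝒜 that is closed under extensions and direct summands, contains f_!(B) for every object B of ℬ, and such that for every X ∈ 𝒳 there exists a short exact sequence 0 → X'' → f_!(B') → X → 0 with X'' ∈ 𝒳. Then for every X ∈ 𝒳, the counit morphism ε_X : f_!(f^*(X)) → X is an epimorphism and its kernel lies in 𝒳. -/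
open CategoryTheory Category Limits

/-- Part (ii) of Lemma 3.4 (Lemma:6) of the paper: for every `X ∈ 𝒳`, the counit morphism
`ε_X : f_!(f^*(X)) ⟶ X` of the adjunction `f_! ⊣ f^*` (with `f^*` faithful) is an
epimorphism and its kernel lies in `𝒳`. -/
theorem stmt_7 {𝒜 : Type*} [Category 𝒜] [Abelian 𝒜] {ℬ : Type*} [Category ℬ] [Abelian ℬ]
    (f_shriek : ℬ ⥤ 𝒜) (f_star : 𝒜 ⥤ ℬ) (adj : f_shriek ⊣ f_star)
    [f_star.Faithful]
    (𝒳 : Set 𝒜)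
    (hXext : ClosedUnderExtensions 𝒳) (hXsum : ClosedUnderDirectSummands 𝒳)
    (hXP : ∀ B : ℬ, f_shriek.obj B ∈ 𝒳)
    (hXres : ∀ X ∈ 𝒳, ∃ (B' : ℬ) (X'' : 𝒜) (i : X'' ⟶ f_shriek.obj B')
      (p : f_shriek.obj B' ⟶ X) (w : i ≫ p = 0),
      X'' ∈ 𝒳 ∧ (ShortComplex.mk i p w).ShortExact)
    (X : 𝒜) (hX : X ∈ 𝒳) :
    Epi (adj.counit.app X) ∧ kernel (adj.counit.app X) ∈ 𝒳 := by
  obtain ⟨B', X'', i, p, w, hX'', hse⟩ := hXres X hX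
  set ε : f_shriek.obj (f_star.obj X) ⟶ X := adj.counit.app X with hε
  -- `p` factors through the counit
  set q : f_shriek.obj B' ⟶ f_shriek.obj (f_star.obj X) :=
    f_shriek.map ((adj.homEquiv B' X) p) with hqdef
  have hq : q ≫ ε = p := by
    have := adj.homEquiv_counit (X := B') (Y := X) (g := (adj.homEquiv B' X) p)
    rw [Equiv.symm_apply_apply] at this
    exact this.symm
  have hp : Epi p := hse.epi_g
  have hεepi : Epi ε := epi_of_epi_fac hq
  refine ⟨hεepi, ?_⟩
  -- the pullback of `p` and `ε`
  set E := pullback p ε with hE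
  have hcomm : i ≫ p = (0 : X'' ⟶ f_shriek.obj (f_star.obj X)) ≫ ε := by simp [w]
  set u : X'' ⟶ E := pullback.lift i 0 hcomm with hu
  have hufst : u ≫ pullback.fst p ε = i := pullback.lift_fst _ _ _
  have husnd : u ≫ pullback.snd p ε = 0 := pullback.lift_snd _ _ _
  have hmono_i : Mono i := hse.mono_f
  have hmono_u : Mono u := mono_of_mono_fac hufst
  -- the kernel fork for `pullback.snd`
  have hkf : IsLimit (KernelFork.ofι u husnd) := by
    refine KernelFork.IsLimit.ofι u husnd
      (fun {T} t ht => hse.exact.lift (t ≫ pullback.fst p ε) ?_) (fun {T} t ht => ?_)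
      (fun {T} t ht m hm => ?_)
    · rw [assoc, pullback.condition, ← assoc, ht, zero_comp]
    · apply pullback.hom_ext
      · rw [assoc, hufst]
        exact hse.exact.lift_f _ _
      · rw [assoc, husnd, comp_zero, ht]
    · dsimp only
      rw [← cancel_mono i]
      refine Eq.trans ?_ (hse.exact.lift_f _ _).symm
      rw [← hufst, ← assoc, hm]
  have hsndepi : Epi (pullback.snd p ε) := inferInstance
  -- the short exact sequence `0 → X'' → E → f_! f^* X → 0`
  have hS1 : (ShortComplex.mk u (pullback.snd p ε) husnd).ShortExact := by
    refine ⟨(ShortComplex.mk u (pullback.snd p ε) husnd).exact_of_f_is_kernel hkf⟩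
  have hEX : E ∈ 𝒳 := hXext _ hS1 hX'' (hXP _)
  -- the kernel of `ε` is a retract of `E`
  set k : kernel ε ⟶ f_shriek.obj (f_star.obj X) := kernel.ι ε with hk
  have hkε : k ≫ ε = 0 := kernel.condition ε
  have hj : (0 : kernel ε ⟶ f_shriek.obj B') ≫ p = k ≫ ε := by simp [hkε]
  set j : kernel ε ⟶ E := pullback.lift 0 k hj with hj'
  have he : (pullback.snd p ε - pullback.fst p ε ≫ q) ≫ ε = 0 := by
    rw [Preadditive.sub_comp, assoc, hq, pullback.condition, sub_self]
  set r : E ⟶ kernel ε := kernel.lift ε (pullback.snd p ε - pullback.fst p ε ≫ q) he with hr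
  have hjr : j ≫ r = 𝟙 (kernel ε) := by
    rw [← cancel_mono k]
    rw [assoc]
    have : r ≫ k = pullback.snd p ε - pullback.fst p ε ≫ q := kernel.lift_ι _ _ _
    rw [this, Preadditive.comp_sub, ← assoc]
    rw [hj', pullback.lift_snd, pullback.lift_fst, zero_comp, sub_zero, id_comp]
  exact hXsum _ _ j r hjr hEX
end

section
/- Let 𝒜 and ℬ be abelian categories. Let f_! : ℬ ⥤ 𝒜 and f^* : 𝒜 ⥤ ℬ be functors with an adjunction f_! ⊣ f^*, and let L : 𝒜 ⥤ ℬ be a functor with an adjunction L ⊣ f_!. Let 𝒳 be a class of objects of 𝒜 that is closed under extensions and direct summands, contains f_!(B) for every object B of ℬ, and such that for every X ∈ 𝒳 there exists a short exact sequence 0 → X → f_!(B) → X' → 0 with X' ∈ 𝒳. Let s : X → f_!(B) be a morphism in 𝒜 with X ∈ 𝒳, and suppose that the adjoint transpose s̄ : L(X) → B of s (under the adjunction isomorphism Hom_ℬ(L(X), B) ≅ Hom_𝒜(X, f_!(B))) is a monomorphism. Then s is a monomorphism and its cokernel lies in 𝒳. -/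
open CategoryTheory Category Limits

section Aux

variable {C : Type*} [Category C] [Abelian C]

/-- For a mono `a : X ⟶ Y` and a short exact sequence `0 → Y → Z → W → 0`,
there is a short exact sequence `0 → coker a → coker (a ≫ m) → W → 0`. -/
lemma aux_coker_seq {X Y Z W : C} (a : X ⟶ Y) [Mono a] (m : Y ⟶ Z) (c : Z ⟶ W)
    (w : m ≫ c = 0) (hse : (ShortComplex.mk m c w).ShortExact) :
    ∃ (f : cokernel a ⟶ cokernel (a ≫ m)) (g : cokernel (a ≫ m) ⟶ W) (wfg : f ≫ g = 0),
      (ShortComplex.mk f g wfg).ShortExact := by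
  have hm : Mono m := hse.mono_f
  have hc : Epi c := hse.epi_g
  have h1 : a ≫ (m ≫ cokernel.π (a ≫ m)) = 0 := by
    rw [← assoc]; exact cokernel.condition _
  have h2 : (a ≫ m) ≫ c = 0 := by rw [assoc, w, comp_zero]
  refine ⟨cokernel.desc a (m ≫ cokernel.π (a ≫ m)) h1, cokernel.desc (a ≫ m) c h2, ?_, ?_⟩
  · rw [← cancel_epi (cokernel.π a)]
    simp [w]
  have hmid : (ShortComplex.mk (a ≫ m) (cokernel.π (a ≫ m))
      (cokernel.condition _)).Exact :=
    ShortComplex.exact_of_g_is_cokernel _ (cokernelIsCokernel _)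
  have hepi : Epi (cokernel.desc (a ≫ m) c h2) := epi_of_epi_fac (cokernel.π_desc (a ≫ m) c h2)
  have hmono : Mono (cokernel.desc a (m ≫ cokernel.π (a ≫ m)) h1) := by
    rw [Preadditive.mono_iff_cancel_zero]
    intro T t ht
    obtain ⟨T', e, he, t', fac⟩ := surjective_up_to_refinements_of_epi (cokernel.π a) t
    have hr1 : (t' ≫ m) ≫ cokernel.π (a ≫ m) = 0 := by
      have := fac =≫ cokernel.desc a (m ≫ cokernel.π (a ≫ m)) h1
      simp only [assoc, cokernel.π_desc, ht, comp_zero] at this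
      rw [assoc]
      exact this.symm
    obtain ⟨T'', e₂, he₂, u, fac₂⟩ := hmid.exact_up_to_refinements (t' ≫ m) hr1
    dsimp at u fac₂
    have hr2 : e₂ ≫ t' = u ≫ a := by
      rw [← cancel_mono m, assoc, assoc]
      simpa using fac₂
    have hr3 : (e₂ ≫ e) ≫ t = 0 := by
      rw [assoc, fac, ← assoc, hr2, assoc, cokernel.condition, comp_zero]
    exact zero_of_epi_comp (e₂ ≫ e) hr3
  have hex : (ShortComplex.mk (cokernel.desc a (m ≫ cokernel.π (a ≫ m)) h1)
      (cokernel.desc (a ≫ m) c h2) (by rw [← cancel_epi (cokernel.π a)]; simp [w])).Exact := by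
    rw [ShortComplex.exact_iff_exact_up_to_refinements]
    intro T t ht
    dsimp at t ht ⊢
    obtain ⟨T', e, he, b, fac⟩ := surjective_up_to_refinements_of_epi (cokernel.π (a ≫ m)) t
    have hb : b ≫ c = 0 := by
      have := fac =≫ cokernel.desc (a ≫ m) c h2
      simp only [assoc, cokernel.π_desc, ht, comp_zero] at this
      exact this.symm
    obtain ⟨T'', e₂, he₂, y, fac₂⟩ := hse.exact.exact_up_to_refinements b hb
    dsimp at y fac₂
    refine ⟨T'', e₂ ≫ e, epi_comp _ _, y ≫ cokernel.π a, ?_⟩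
    rw [assoc, fac, ← assoc, fac₂]
    simp
  exact { exact := hex, mono_f := hmono, epi_g := hepi }

/-- The pushout of a short exact sequence `0 → X → B' → X' → 0` along `a : X ⟶ A`
gives a short exact sequence `0 → A → P → X' → 0`. -/
lemma aux_pushout_ses {X A B' X' : C} (a : X ⟶ A) (i : X ⟶ B') [Mono i]
    (p : B' ⟶ X') (w : i ≫ p = 0) (hse : (ShortComplex.mk i p w).ShortExact) :
    ∃ (g : pushout a i ⟶ X') (wg : pushout.inl a i ≫ g = 0),
      (ShortComplex.mk (pushout.inl a i) g wg).ShortExact := by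
  have hp : Epi p := hse.epi_g
  have hw : a ≫ (0 : A ⟶ X') = i ≫ p := by rw [comp_zero, w]
  refine ⟨pushout.desc 0 p hw, by rw [pushout.inl_desc], ?_⟩
  have hepi : Epi (pushout.desc 0 p hw) := epi_of_epi_fac (pushout.inr_desc 0 p hw)
  have hmono : Mono (pushout.inl a i) := Abelian.mono_pushout_of_mono_g a i
  have hex : (ShortComplex.mk (pushout.inl a i) (pushout.desc 0 p hw) (by rw [pushout.inl_desc])).Exact := by
    rw [ShortComplex.exact_iff_exact_up_to_refinements]
    intro T t ht
    dsimp at t ht ⊢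
    have hφ : Epi (biprod.desc (pushout.inl a i) (pushout.inr a i)) := by
      constructor
      intro Z ψ₁ ψ₂ h
      apply pushout.hom_ext
      · simpa using biprod.inl ≫= h
      · simpa using biprod.inr ≫= h
    obtain ⟨T', e, he, u, fac⟩ :=
      surjective_up_to_refinements_of_epi (biprod.desc (pushout.inl a i) (pushout.inr a i)) t
    have hφeq : biprod.desc (pushout.inl a i) (pushout.inr a i) =
        biprod.fst ≫ pushout.inl a i + biprod.snd ≫ pushout.inr a i := by
      apply biprod.hom_ext' <;> simp
    have h2 : (u ≫ biprod.snd) ≫ p = 0 := by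
      have := fac =≫ pushout.desc 0 p hw
      rw [assoc, ht, comp_zero, assoc, hφeq] at this
      simp only [Preadditive.add_comp, assoc, pushout.inl_desc, pushout.inr_desc,
        comp_zero, zero_add] at this
      rw [assoc]
      exact this.symm
    obtain ⟨T'', e₂, he₂, x, fac₂⟩ := hse.exact.exact_up_to_refinements (u ≫ biprod.snd) h2
    dsimp at x fac₂
    refine ⟨T'', e₂ ≫ e, epi_comp _ _, e₂ ≫ u ≫ biprod.fst + x ≫ a, ?_⟩
    rw [assoc, fac, hφeq]
    simp only [Preadditive.comp_add, Preadditive.add_comp, assoc]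
    congr 1
    rw [← assoc u, ← assoc e₂, fac₂, assoc, ← pushout.condition]
  exact { exact := hex, mono_f := hmono, epi_g := hepi }

end Aux

/-- Part (i) of Lemma 3.5 (Lemma:10) of the paper: if `s : X ⟶ f_!(B)` with `X ∈ 𝒳` has a
monomorphic adjoint transpose `L(X) ⟶ B` (under `L ⊣ f_!`), then `s` is a monomorphism
and its cokernel lies in `𝒳`. -/
theorem stmt_8 {𝒜 : Type*} [Category 𝒜] [Abelian 𝒜] {ℬ : Type*} [Category ℬ] [Abelian ℬ]
    (f_shriek : ℬ ⥤ 𝒜) (f_star : 𝒜 ⥤ ℬ) (adj₁ : f_shriek ⊣ f_star)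
    (L : 𝒜 ⥤ ℬ) (adj₂ : L ⊣ f_shriek)
    (𝒳 : Set 𝒜)
    (hXext : ClosedUnderExtensions 𝒳) (hXsum : ClosedUnderDirectSummands 𝒳)
    (hXP : ∀ B : ℬ, f_shriek.obj B ∈ 𝒳)
    (hXcores : ∀ X ∈ 𝒳, ∃ (B : ℬ) (X' : 𝒜) (i : X ⟶ f_shriek.obj B)
      (p : f_shriek.obj B ⟶ X') (w : i ≫ p = 0),
      X' ∈ 𝒳 ∧ (ShortComplex.mk i p w).ShortExact)
    (X : 𝒜) (hX : X ∈ 𝒳) (B : ℬ) (s : X ⟶ f_shriek.obj B)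
    (hs : Mono ((adj₂.homEquiv X B).symm s)) :
    Mono s ∧ cokernel s ∈ 𝒳 := by
  -- notation
  set s' : L.obj X ⟶ B := (adj₂.homEquiv X B).symm s with hs'
  have hseq : s = adj₂.unit.app X ≫ f_shriek.map s' := by
    conv_lhs => rw [← (adj₂.homEquiv X B).apply_symm_apply s]
    rw [Adjunction.homEquiv_unit]
  -- the coresolution of X
  obtain ⟨B', X', i, p, w, hX', hseB'⟩ := hXcores X hX
  have hi : Mono i := hseB'.mono_f
  have hieq : i = adj₂.unit.app X ≫ f_shriek.map ((adj₂.homEquiv X B').symm i) := by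
    conv_lhs => rw [← (adj₂.homEquiv X B').apply_symm_apply i]
    rw [Adjunction.homEquiv_unit]
  -- the unit at X is a mono
  have hη : Mono (adj₂.unit.app X) := by
    have : Mono (adj₂.unit.app X ≫ f_shriek.map ((adj₂.homEquiv X B').symm i)) := by
      rw [← hieq]; exact hi
    exact mono_of_mono (adj₂.unit.app X) (f_shriek.map ((adj₂.homEquiv X B').symm i))
  -- f_! is exact
  have hPZ : f_shriek.PreservesZeroMorphisms := by
    have := adj₁.isLeftAdjoint
    infer_instance
  have hPL : PreservesFiniteLimits f_shriek := by
    have : PreservesLimitsOfSize.{0, 0} f_shriek := adj₂.rightAdjoint_preservesLimits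
    exact PreservesLimitsOfSize.preservesFiniteLimits _
  have hPC : PreservesFiniteColimits f_shriek := by
    have : PreservesColimitsOfSize.{0, 0} f_shriek := adj₁.leftAdjoint_preservesColimits
    exact PreservesColimitsOfSize.preservesFiniteColimits _
  -- the short exact sequence 0 → L X → B → coker s' → 0 in ℬ and its image under f_!
  have hseB : (ShortComplex.mk s' (cokernel.π s') (cokernel.condition s')).ShortExact :=
    { exact := ShortComplex.exact_of_g_is_cokernel _ (cokernelIsCokernel s')
      mono_f := hs
      epi_g := inferInstance }
  have hseA : (ShortComplex.mk (f_shriek.map s') (f_shriek.map (cokernel.π s'))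
      (by rw [← f_shriek.map_comp, cokernel.condition, f_shriek.map_zero])).ShortExact := by
    have := hseB.map_of_exact f_shriek
    exact this
  have hmono_m : Mono (f_shriek.map s') := hseA.mono_f
  -- s is a mono
  have hmonos : Mono s := by
    rw [hseq]
    exact mono_comp _ _
  refine ⟨hmonos, ?_⟩
  -- the pushout of the coresolution along the unit
  obtain ⟨g, wg, hseP⟩ := aux_pushout_ses (adj₂.unit.app X) i p w hseB'
  have hP : pushout (adj₂.unit.app X) i ∈ 𝒳 :=
    hXext _ hseP (hXP (L.obj X)) hX'
  -- the cokernel of the unit is a direct summand of the pushout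
  have hCη : cokernel (adj₂.unit.app X) ∈ 𝒳 := by
    refine hXsum _ (pushout (adj₂.unit.app X) i)
      (cokernel.desc _ (pushout.inl _ _ ≫
        (𝟙 _ - pushout.desc (f_shriek.map ((adj₂.homEquiv X B').symm i)) (𝟙 _)
          (by rw [comp_id, ← hieq]) ≫ pushout.inr _ _)) ?_)
      (pushout.desc (cokernel.π _) 0 (by simp)) ?_ hP
    · rw [← assoc, pushout.condition, assoc, Preadditive.comp_sub, comp_id,
        ← assoc (pushout.inr _ _), pushout.inr_desc, id_comp, sub_self, comp_zero]
    · rw [← cancel_epi (cokernel.π (adj₂.unit.app X)), ← assoc, cokernel.π_desc]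
      simp [Preadditive.sub_comp, Preadditive.comp_sub]
      rw [pushout.inl_desc, pushout.inr_desc, comp_zero, comp_zero, sub_zero]
  -- the cokernel sequence 0 → coker η → coker s → f_!(coker s') → 0
  obtain ⟨f, g₂, wfg, hseF⟩ := aux_coker_seq (adj₂.unit.app X) (f_shriek.map s')
    (f_shriek.map (cokernel.π s'))
    (by rw [← f_shriek.map_comp, cokernel.condition, f_shriek.map_zero]) hseA
  have := hXext _ hseF hCη (hXP (cokernel s'))
  rw [hseq]
  exact this
end

section
/- Let 𝒜 and ℬ be abelian categories. Let f_! : ℬ ⥤ 𝒜 and f^* : 𝒜 ⥤ ℬ be functors with an adjunction f_! ⊣ f^*, where f^* is faithful, and let L : 𝒜 ⥤ ℬ be a functor with an adjunction L ⊣ f_!. Let 𝒳 be a class of objects of 𝒜 that is closed under extensions and direct summands, contains f_!(B) for every object B of ℬ, and such that for every X ∈ 𝒳 there exists a short exact sequence 0 → X'' → f_!(B') → X → 0 with X'' ∈ 𝒳. Let s' : f_!(B) → X be a morphism in 𝒜 with X ∈ 𝒳, and suppose that the adjoint transpose s̄' : B → f^*(X) of s' (under the adjunction isomorphism Hom_𝒜(f_!(B),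 X) ≅ Hom_ℬ(B, f^*(X))) is an epimorphism. Then s' is an epimorphism and its kernel lies in 𝒳. -/
open CategoryTheory Category Limits

/-- The canonical map `kernel g ⟶ pullback f g`. -/
noncomputable def kernelToPullback {C : Type*} [Category C] [Abelian C] {A B X : C}
    (f : A ⟶ X) (g : B ⟶ X) : kernel g ⟶ pullback f g :=
  pullback.lift (0 : kernel g ⟶ A) (kernel.ι g) (by simp)

@[simp] lemma kernelToPullback_fst {C : Type*} [Category C] [Abelian C] {A B X : C}
    (f : A ⟶ X) (g : B ⟶ X) : kernelToPullback f g ≫ pullback.fst f g = 0 := by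
  exact pullback.lift_fst _ _ _

@[simp] lemma kernelToPullback_snd {C : Type*} [Category C] [Abelian C] {A B X : C}
    (f : A ⟶ X) (g : B ⟶ X) : kernelToPullback f g ≫ pullback.snd f g = kernel.ι g := by
  exact pullback.lift_snd _ _ _

/-- If `g : B ⟶ X` is an epimorphism, then
`0 ⟶ kernel g ⟶ pullback f g ⟶ A ⟶ 0` (via `pullback.fst`) is short exact. -/
lemma pullback_fst_shortExact {C : Type*} [Category C] [Abelian C] {A B X : C}
    (f : A ⟶ X) (g : B ⟶ X) [Epi g] :
    (ShortComplex.mk (kernelToPullback f g) (pullback.fst f g)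
      (kernelToPullback_fst f g)).ShortExact := by
  have hmono : Mono (kernelToPullback f g) := mono_of_mono_fac (kernelToPullback_snd f g)
  refine { exact := ?_, mono_f := hmono, epi_g := inferInstance }
  apply ShortComplex.exact_of_f_is_kernel
  refine KernelFork.IsLimit.ofι _ _
    (fun {W'} t ht => kernel.lift g (t ≫ pullback.snd f g) ?_)
    (fun {W'} t ht => ?_) (fun {W'} t ht m hm => ?_)
  · rw [assoc, ← pullback.condition, ← assoc, ht, zero_comp]
  · apply pullback.hom_ext <;> simp [ht]
  · rw [← cancel_mono (kernelToPullback f g), hm]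
    apply pullback.hom_ext <;> simp [ht]

/-- Part (ii) of Lemma 3.5 (Lemma:10) of the paper: if `s' : f_!(B) ⟶ X` with `X ∈ 𝒳` has
an epimorphic adjoint transpose `B ⟶ f^*(X)` (under `f_! ⊣ f^*`, with `f^*` faithful),
then `s'` is an epimorphism and its kernel lies in `𝒳`. -/
theorem stmt_9 {𝒜 : Type*} [Category 𝒜] [Abelian 𝒜] {ℬ : Type*} [Category ℬ] [Abelian ℬ]
    (f_shriek : ℬ ⥤ 𝒜) (f_star : 𝒜 ⥤ ℬ) (adj₁ : f_shriek ⊣ f_star)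
    [f_star.Faithful]
    (L : 𝒜 ⥤ ℬ) (adj₂ : L ⊣ f_shriek)
    (𝒳 : Set 𝒜)
    (hXext : ClosedUnderExtensions 𝒳) (hXsum : ClosedUnderDirectSummands 𝒳)
    (hXP : ∀ B : ℬ, f_shriek.obj B ∈ 𝒳)
    (hXres : ∀ X ∈ 𝒳, ∃ (B' : ℬ) (X'' : 𝒜) (i : X'' ⟶ f_shriek.obj B')
      (p : f_shriek.obj B' ⟶ X) (w : i ≫ p = 0),
      X'' ∈ 𝒳 ∧ (ShortComplex.mk i p w).ShortExact)
    (X : 𝒜) (hX : X ∈ 𝒳) (B : ℬ) (s' : f_shriek.obj B ⟶ X)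
    (hs' : Epi (adj₁.homEquiv B X s')) :
    Epi s' ∧ kernel s' ∈ 𝒳 := by
  -- membership in 𝒳 is invariant under isomorphism
  have memIso : ∀ {Y Z : 𝒜}, (Y ≅ Z) → Z ∈ 𝒳 → Y ∈ 𝒳 :=
    fun e hZ => hXsum _ _ e.hom e.inv e.hom_inv_id hZ
  -- `f_star.map s'` is an epimorphism, hence so is `s'` since `f_star` is faithful
  have hfs : Epi (f_star.map s') := by
    have h1 : adj₁.homEquiv B X s' = adj₁.unit.app B ≫ f_star.map s' :=
      adj₁.homEquiv_unit B X s'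
    rw [h1] at hs'
    exact @epi_of_epi _ _ _ _ _ _ _ hs'
  have hepi : Epi s' := f_star.epi_of_epi_map hfs
  refine ⟨hepi, ?_⟩
  -- instances on f_shriek : exactness
  haveI : f_shriek.IsLeftAdjoint := adj₁.isLeftAdjoint
  haveI : PreservesColimits f_shriek := adj₁.leftAdjoint_preservesColimits
  haveI : PreservesLimits f_shriek := adj₂.rightAdjoint_preservesLimits
  -- the special resolution of X
  obtain ⟨B', X'', i, p, w, hX'', hSE⟩ := hXres X hX
  haveI hpepi : Epi p := hSE.epi_g
  haveI hmi : Mono i := hSE.mono_f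
  -- pullback of the transposes in ℬ
  set sb : B ⟶ f_star.obj X := adj₁.homEquiv B X s' with hsb
  set pb : B' ⟶ f_star.obj X := adj₁.homEquiv B' X p with hpb
  haveI : Epi sb := hs'
  set gB : pullback sb pb ⟶ B' := pullback.snd sb pb with hgB
  set g : f_shriek.obj (pullback sb pb) ⟶ f_shriek.obj B' := f_shriek.map gB with hg
  haveI : Epi g := f_shriek.map_epi gB
  set h : f_shriek.obj (pullback sb pb) ⟶ f_shriek.obj B :=
    f_shriek.map (pullback.fst sb pb) with hh
  have hs'eq : f_shriek.map sb ≫ adj₁.counit.app X = s' := by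
    rw [← adj₁.homEquiv_counit B X sb]
    exact (adj₁.homEquiv B X).symm_apply_apply s'
  have hpeq : f_shriek.map pb ≫ adj₁.counit.app X = p := by
    rw [← adj₁.homEquiv_counit B' X pb]
    exact (adj₁.homEquiv B' X).symm_apply_apply p
  have hcomm : h ≫ s' = g ≫ p := by
    rw [← hs'eq, ← hpeq, hh, hg, ← Functor.map_comp_assoc, ← Functor.map_comp_assoc,
      pullback.condition]
  -- membership of the two kernels
  have hkerp : kernel p ∈ 𝒳 := by
    refine memIso ?_ hX''
    exact (IsLimit.conePointUniqueUpToIso hSE.exact.fIsKernel (kernelIsKernel p)).symm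
  have hkerg : kernel g ∈ 𝒳 := memIso (PreservesKernel.iso f_shriek gB).symm (hXP _)
  -- the iterated pullback E lies in 𝒳
  have hE₂ : pullback s' p ∈ 𝒳 :=
    hXext _ (pullback_fst_shortExact s' p) hkerp (hXP B)
  have hE : pullback (pullback.snd s' p) g ∈ 𝒳 :=
    hXext _ (pullback_fst_shortExact (pullback.snd s' p) g) hkerg hE₂
  -- kernel s' is a retract of E
  set i₀ : kernel s' ⟶ pullback s' p :=
    pullback.lift (kernel.ι s') 0 (by simp) with hi₀
  set iE : kernel s' ⟶ pullback (pullback.snd s' p) g :=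
    pullback.lift i₀ 0 (by rw [hi₀]; exact (pullback.lift_snd (f := s') (g := p) _ _ _).trans zero_comp.symm) with hiE
  set r : pullback (pullback.snd s' p) g ⟶ kernel s' :=
    kernel.lift s'
      (pullback.fst (pullback.snd s' p) g ≫ pullback.fst s' p -
        pullback.snd (pullback.snd s' p) g ≫ h)
      (by
        rw [Preadditive.sub_comp, assoc, assoc, pullback.condition (f := s') (g := p),
          ← assoc, pullback.condition (f := pullback.snd s' p) (g := g), assoc,
          ← hcomm]
        exact sub_self _) with hr
  have hir : iE ≫ r = 𝟙 (kernel s') := by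
    rw [← cancel_mono (kernel.ι s')]
    simp [hr, hiE, hi₀, Preadditive.comp_sub]
    rw [pullback.lift_fst_assoc, pullback.lift_fst, pullback.lift_snd_assoc, zero_comp, sub_zero]
  exact hXsum _ _ iE r hir hE
end

section
/- Let 𝒜 be an abelian category and let 𝓕 be a class of objects of 𝒜 that is closed under extensions and under direct summands, and such that for every A ∈ 𝓕 there exists a short exact sequence 0 → A' → Q → A → 0 in 𝒜 with Q projective and A' ∈ 𝓕. Then 𝓕 is closed under kernels of epimorphisms: for every short exact sequence 0 → A₃ → A₂ → A₁ → 0 in 𝒜 with A₁ ∈ 𝓕 and A₂ ∈ 𝓕, also A₃ ∈ 𝓕. -/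
open CategoryTheory Category Limits

/-- The nontrivial part of Lemma 2.6 (Lemma:1) of the paper: a class `𝓕` closed under
extensions and direct summands, such that every `A ∈ 𝓕` admits a short exact sequence
`0 → A' → Q → A → 0` with `Q` projective and `A' ∈ 𝓕`, is closed under kernels of
epimorphisms. -/
theorem stmt_10 {𝒜 : Type*} [Category 𝒜] [Abelian 𝒜]
    (𝓕 : Set 𝒜)
    (hFext : ClosedUnderExtensions 𝓕) (hFsum : ClosedUnderDirectSummands 𝓕)
    (hFres : ∀ A ∈ 𝓕, ∃ (Q : 𝒜) (A' : 𝒜) (i : A' ⟶ Q) (p : Q ⟶ A) (w : i ≫ p = 0),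
      Projective Q ∧ A' ∈ 𝓕 ∧ (ShortComplex.mk i p w).ShortExact) :
    ∀ (S : ShortComplex 𝒜), S.ShortExact → S.X₂ ∈ 𝓕 → S.X₃ ∈ 𝓕 → S.X₁ ∈ 𝓕 := by
  intro S hS h2 h3
  obtain ⟨Q, A', i, p, w, hQ, hA', hP⟩ := hFres S.X₃ h3
  have hepi_g : Epi S.g := hS.epi_g
  have hmono_f : Mono S.f := hS.mono_f
  have hepi_p : Epi p := hP.epi_g
  have hmono_i : Mono i := hP.mono_f
  -- the pullback of `g : X₂ → X₃` and `p : Q → X₃`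
  let B := pullback S.g p
  let fst : B ⟶ S.X₂ := pullback.fst S.g p
  let snd : B ⟶ Q := pullback.snd S.g p
  have hcond : fst ≫ S.g = snd ≫ p := pullback.condition
  -- the map `X₁ → B`
  let j : S.X₁ ⟶ B := pullback.lift S.f 0 (by simp [S.zero])
  have hjf : j ≫ fst = S.f := pullback.lift_fst _ _ _
  have hjs : j ≫ snd = 0 := pullback.lift_snd _ _ _
  -- the map `A' → B`
  let k : A' ⟶ B := pullback.lift 0 i (by simp [w])
  have hkf : k ≫ fst = 0 := pullback.lift_fst _ _ _
  have hks : k ≫ snd = i := pullback.lift_snd _ _ _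
  have monoj : Mono j := by
    have : Mono (j ≫ fst) := by rw [hjf]; infer_instance
    exact mono_of_mono j fst
  have monok : Mono k := by
    have : Mono (k ≫ snd) := by rw [hks]; infer_instance
    exact mono_of_mono k snd
  -- the short exact sequence `0 → A' → B → X₂ → 0`
  let S1 : ShortComplex 𝒜 := ShortComplex.mk k fst hkf
  have hS1 : S1.ShortExact := by
    refine ShortComplex.ShortExact.mk' ?_ monok ?_
    · apply ShortComplex.exact_of_f_is_kernel
      refine KernelFork.IsLimit.ofι' _ _ (fun {T} t ht => ?_)
      have h0 : (t ≫ snd) ≫ p = 0 := by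
        rw [assoc, ← hcond, ← assoc, ht, zero_comp]
      obtain ⟨l, hl⟩ := KernelFork.IsLimit.lift' hP.fIsKernel (t ≫ snd) h0
      refine ⟨l, pullback.hom_ext ?_ ?_⟩
      · show (l ≫ k) ≫ fst = t ≫ fst
        rw [assoc, hkf, comp_zero, ht]
      · show (l ≫ k) ≫ snd = t ≫ snd
        rw [assoc, hks]; exact hl
    · exact Abelian.epi_pullback_of_epi_g _ _
  have hB : B ∈ 𝓕 := hFext S1 hS1 hA' h2
  -- the short exact sequence `0 → X₁ → B → Q → 0`
  let S2 : ShortComplex 𝒜 := ShortComplex.mk j snd hjs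
  have hS2 : S2.ShortExact := by
    refine ShortComplex.ShortExact.mk' ?_ monoj ?_
    · apply ShortComplex.exact_of_f_is_kernel
      refine KernelFork.IsLimit.ofι' _ _ (fun {T} t ht => ?_)
      have h0 : (t ≫ fst) ≫ S.g = 0 := by
        rw [assoc, hcond, ← assoc, ht, zero_comp]
      obtain ⟨l, hl⟩ := KernelFork.IsLimit.lift' hS.fIsKernel (t ≫ fst) h0
      refine ⟨l, pullback.hom_ext ?_ ?_⟩
      · show (l ≫ j) ≫ fst = t ≫ fst
        rw [assoc, hjf]; exact hl
      · show (l ≫ j) ≫ snd = t ≫ snd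
        rw [assoc, hjs, comp_zero, ht]
    · exact Abelian.epi_pullback_of_epi_f _ _
  -- since `Q` is projective, this sequence splits, so `X₁` is a direct summand of `B`
  haveI : Projective S2.X₃ := hQ
  let sp := hS2.splittingOfProjective
  exact hFsum S.X₁ B j sp.r sp.f_r hB
end

section
/- Let 𝒜 be an abelian category and let f : A₂ → A₁ be a morphism in 𝒜. Assume that there exists a monomorphism from A₂ into some projective object of 𝒜 (in the paper this holds because A₂ is assumed Gorenstein projective), and assume that for every projective object Q of 𝒜 the map Hom_𝒜(A₁, Q) → Hom_𝒜(A₂, Q) given by g ↦ g ∘ f is surjective. Then f is a monomorphism. -/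
open CategoryTheory Category Limits

/-- Lemma 2.7 (Lemma:2) of the paper: let `f : A₂ ⟶ A₁` be a morphism in an abelian
category such that `A₂` admits a monomorphism into a projective object, and such that
`Hom(A₁, Q) → Hom(A₂, Q)`, `g ↦ f ≫ g`, is surjective for every projective `Q`.
Then `f` is a monomorphism. -/
theorem stmt_11 {𝒜 : Type*} [Category 𝒜] [Abelian 𝒜] {A₂ A₁ : 𝒜} (f : A₂ ⟶ A₁)
    (hmono : ∃ (Q₀ : 𝒜) (i : A₂ ⟶ Q₀), Projective Q₀ ∧ Mono i)
    (hsurj : ∀ (Q : 𝒜), Projective Q →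
      Function.Surjective (fun g : A₁ ⟶ Q => f ≫ g : (A₁ ⟶ Q) → (A₂ ⟶ Q))) :
    Mono f := by
  obtain ⟨Q₀, i, hQ, hi⟩ := hmono
  obtain ⟨g, hg⟩ := hsurj Q₀ hQ i
  simp only at hg
  exact mono_of_mono_fac hg
end

section
/- Let k be a field and let Λ be a finite-dimensional k-algebra. Then for every left Λ-module M (not necessarily finitely generated), the following are equivalent: (1) Ext¹_Λ(M, Λ) = 0, where Λ is regarded as a left module over itself; (2) Ext¹_Λ(M, Q) = 0 for every projective left Λ-module Q. -/
open CategoryTheory Limits Opposite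
universe u

section ModulePart

theorem exists_retraction_pi (k : Type u) [Field k] (Λ : Type u) [Ring Λ]
    [Algebra k Λ] [FiniteDimensional k Λ] (ι : Type u) :
    ∃ r : (ι → Λ) →ₗ[Λ] (ι →₀ Λ), ∀ x : ι →₀ Λ, r (⇑x) = x := by
  classical
  set W₀ : Submodule k (ι → k) :=
    LinearMap.range (Finsupp.lcoeFun (α := ι) (M := k) (R := k)) with hW₀def
  obtain ⟨U, hU⟩ := W₀.exists_isCompl
  set uB := Module.Basis.ofVectorSpace k U with huB
  set b := Module.finBasis k Λ with hb
  set ut : Module.Basis.ofVectorSpaceIndex k U → (ι → Λ) :=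
    fun j i => algebraMap k Λ ((uB j : ι → k) i) with hut
  set S : Submodule Λ (ι → Λ) :=
    LinearMap.range (Finsupp.lcoeFun (α := ι) (M := Λ) (R := Λ)) with hSdef
  set R' : Submodule Λ (ι → Λ) := Submodule.span Λ (Set.range ut) with hR'def
  have hmemS : ∀ (w : ι → k), w ∈ W₀ → ∀ (c : Λ), (fun i => w i • c) ∈ S := by
    rintro w ⟨g, hg⟩ c
    refine ⟨g.mapRange (· • c) (zero_smul _ _), funext fun i => ?_⟩
    have : g i = w i := congrFun hg i
    simp [Finsupp.mapRange_apply, this]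
  have hmemR : ∀ (z : ι → k), z ∈ U → ∀ (c : Λ), (fun i => z i • c) ∈ R' := by
    have hUspan : U = Submodule.span k (Set.range (fun j => ((uB j : U) : ι → k))) := by
      conv_lhs => rw [← Submodule.map_subtype_top U]
      rw [← uB.span_eq, Submodule.map_span, ← Set.range_comp]
      rfl
    intro z hz c
    rw [hUspan] at hz
    induction hz using Submodule.span_induction with
    | mem x hx =>
        obtain ⟨j, rfl⟩ := hx
        show (fun i => ((uB j : U) : ι → k) i • c) ∈ R'
        have : (fun i => ((uB j : U) : ι → k) i • c) = c • ut j := by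
          funext i
          rw [hut]
          simp only [Pi.smul_apply, smul_eq_mul, Algebra.smul_def]
          rw [← Algebra.commutes]
        rw [this]
        exact Submodule.smul_mem _ _ (Submodule.subset_span ⟨j, rfl⟩)
    | zero =>
        have : (fun i => (0 : ι → k) i • c) = (0 : ι → Λ) := by
          funext i; simp
        rw [this]; exact zero_mem R'
    | add x y _ _ hx hy =>
        have : (fun i => (x + y) i • c) =
            (fun i => x i • c) + (fun i => y i • c) := by
          funext i; simp [add_smul]
        rw [this]; exact add_mem hx hy
    | smul a x _ hx =>
        have : (fun i => (a • x) i • c) = a • (fun i => x i • c) := by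
          funext i
          rw [Pi.smul_apply, Pi.smul_apply, smul_assoc]
        rw [this]
        have := Submodule.smul_mem R' (algebraMap k Λ a) hx
        rwa [algebraMap_smul] at this
  have hcodis : Codisjoint S R' := by
    rw [codisjoint_iff, eq_top_iff]
    rintro v -
    have hv : v = ∑ m : Fin (Module.finrank k Λ),
        (fun i => b.repr (v i) m • b m) := by
      funext i
      rw [Finset.sum_apply]
      exact (b.sum_repr (v i)).symm
    rw [hv]
    refine Submodule.sum_mem _ fun m _ => ?_
    set w : ι → k := fun i => b.repr (v i) m with hw
    have hwtop : w ∈ W₀ ⊔ U := by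
      rw [hU.codisjoint.eq_top]; trivial
    obtain ⟨y, hy, z, hz, hyz⟩ := Submodule.mem_sup.1 hwtop
    have : (fun i => w i • b m) =
        (fun i => y i • b m) + (fun i => z i • b m) := by
      funext i
      have : w i = y i + z i := by rw [← hyz]; rfl
      simp [this, add_smul]
    rw [this]
    exact Submodule.mem_sup.2 ⟨_, hmemS y hy (b m), _, hmemR z hz (b m), rfl⟩
  have hdis : Disjoint S R' := by
    rw [Submodule.disjoint_def]
    rintro x ⟨g, hg⟩ hxR
    obtain ⟨f, hf⟩ := Finsupp.mem_span_range_iff_exists_finsupp.1 hxR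
    suffices hf0 : f = 0 by
      rw [← hf, hf0, Finsupp.sum_zero_index]
    have hcoeff : ∀ m j, b.repr (f j) m = 0 := by
      intro m j
      set fm : _ →₀ k := f.mapRange (fun a => b.repr a m) (by simp) with hfm
      set y : U := Finsupp.linearCombination k (fun j => uB j) fm with hy
      have hyx : ((y : U) : ι → k) = fun i => b.repr (x i) m := by
        funext i
        rw [hy, Finsupp.linearCombination_apply]
        have h1 : ((fm.sum fun j a => a • uB j : U) : ι → k) i
            = fm.sum fun j a => a * ((uB j : U) : ι → k) i := by
          simp only [Finsupp.sum, AddSubmonoidClass.coe_finset_sum, Finset.sum_apply,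
            Submodule.coe_smul, Pi.smul_apply, smul_eq_mul]
        rw [h1, hfm, Finsupp.sum_mapRange_index (by simp)]
        have h2 : x i = f.sum fun j a => a * algebraMap k Λ (((uB j : U) : ι → k) i) := by
          rw [← hf]
          simp only [Finsupp.sum, Finset.sum_apply]
          refine Finset.sum_congr rfl fun j _ => ?_
          rfl
        rw [h2, map_finsuppSum, Finsupp.sum_apply]
        refine Finsupp.sum_congr fun j _ => ?_
        have h3 : f j * algebraMap k Λ (((uB j : U) : ι → k) i)
            = (((uB j : U) : ι → k) i) • f j := by
          rw [Algebra.smul_def, Algebra.commutes]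
        rw [h3, map_smul, Finsupp.smul_apply, smul_eq_mul, mul_comm]
      have hyW : ((y : U) : ι → k) ∈ W₀ := by
        refine ⟨g.mapRange (fun a => b.repr a m) (by simp), funext fun i => ?_⟩
        have : g i = x i := congrFun hg i
        show b.repr (g i) m = _
        rw [this, hyx]
      have hy0 : ((y : U) : ι → k) = 0 :=
        Submodule.disjoint_def.1 hU.disjoint _ hyW (SetLike.coe_mem y)
      have : y = 0 := Subtype.ext hy0
      have hfm0 : fm = 0 := by
        have h4 := congrArg uB.repr this
        rwa [hy, Module.Basis.repr_linearCombination, LinearEquiv.map_zero] at h4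
      have := congrArg (fun t => t j) hfm0
      simpa [hfm, Finsupp.mapRange_apply] using this
    have hfj : ∀ j, f j = 0 := by
      intro j
      have : b.repr (f j) = 0 := by
        ext m; simpa using hcoeff m j
      exact b.repr.map_eq_zero_iff.1 this
    ext j
    exact hfj j
  have hcompl : IsCompl S R' := ⟨hdis, hcodis⟩
  have hinj : Function.Injective (Finsupp.lcoeFun (α := ι) (M := Λ) (R := Λ)) :=
    fun a b h => DFunLike.coe_injective (show ⇑a = ⇑b from h)
  set e : (ι →₀ Λ) ≃ₗ[Λ] S := LinearEquiv.ofInjective _ hinj with he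
  refine ⟨e.symm.toLinearMap ∘ₗ (Submodule.linearProjOfIsCompl S R' hcompl), fun x => ?_⟩
  have h1 : Submodule.linearProjOfIsCompl S R' hcompl (⇑x) = e x := by
    have h2 := Submodule.linearProjOfIsCompl_apply_left hcompl (e x)
    have h3 : ((e x : S) : ι → Λ) = ⇑x := by rw [he]; rfl
    rw [← h3]; exact h2
  show e.symm (Submodule.linearProjOfIsCompl S R' hcompl (⇑x)) = x
  rw [h1, LinearEquiv.symm_apply_apply]

end ModulePart

theorem key_lifting (k : Type u) [Field k] (Λ : Type u) [Ring Λ]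
    [Algebra k Λ] [FiniteDimensional k Λ]
    {P₀ P₁ P₂ Q : Type u} [AddCommGroup P₀] [Module Λ P₀] [AddCommGroup P₁] [Module Λ P₁]
    [AddCommGroup P₂] [Module Λ P₂] [AddCommGroup Q] [Module Λ Q]
    (hQ : Module.Projective Λ Q)
    (d₁ : P₁ →ₗ[Λ] P₀) (d₂ : P₂ →ₗ[Λ] P₁)
    (H : ∀ φ : P₁ →ₗ[Λ] Λ, φ.comp d₂ = 0 → ∃ ψ : P₀ →ₗ[Λ] Λ, ψ.comp d₁ = φ)
    (φ : P₁ →ₗ[Λ] Q) (hφ : φ.comp d₂ = 0) :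
    ∃ ψ : P₀ →ₗ[Λ] Q, ψ.comp d₁ = φ := by
  classical
  obtain ⟨s, hs⟩ := Module.projective_def.1 hQ
  obtain ⟨r, hr⟩ := exists_retraction_pi k Λ Q
  set ρ : (Q → Λ) →ₗ[Λ] Q := (Finsupp.linearCombination Λ id).comp r with hρ
  set j : Q →ₗ[Λ] (Q → Λ) := (Finsupp.lcoeFun).comp s with hj
  have hρj : ∀ q : Q, ρ (j q) = q := by
    intro q
    show Finsupp.linearCombination Λ id (r ⇑(s q)) = q
    rw [hr]
    exact hs q
  have hcomp : ∀ i : Q, ((LinearMap.proj i).comp (j.comp φ)).comp d₂ = 0 := by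
    intro i
    ext x
    have h0 : φ (d₂ x) = 0 := by
      rw [← LinearMap.comp_apply, hφ]; rfl
    simp [h0]
  choose ψ hψ using fun i : Q => H ((LinearMap.proj i).comp (j.comp φ)) (hcomp i)
  refine ⟨ρ.comp (LinearMap.pi ψ), ?_⟩
  ext x
  have hpi : (LinearMap.pi ψ) (d₁ x) = j (φ x) := by
    funext i
    have h1 := congrArg (fun t => t x) (hψ i)
    simpa using h1
  show ρ ((LinearMap.pi ψ) (d₁ x)) = φ x
  rw [hpi, hρj]

lemma ext1_isZero_iff {Λ : Type u} [Ring Λ] (M N : ModuleCat.{u} Λ) (P : ProjectiveResolution M) :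
    IsZero (((Ext ℤ (ModuleCat.{u} Λ) 1).obj (op M)).obj N) ↔
      ∀ φ : P.complex.X 1 ⟶ N, P.complex.d 2 1 ≫ φ = 0 →
        ∃ ψ : P.complex.X 0 ⟶ N, P.complex.d 1 0 ≫ ψ = φ := by
  rw [(P.isoExt (R := ℤ) 1 N).isZero_iff,
    ← HomologicalComplex.exactAt_iff_isZero_homology,
    HomologicalComplex.exactAt_iff' _ 0 1 2 (by simp) (by simp),
    ShortComplex.moduleCat_exact_iff]
  exact Iff.rfl

/-- Example 3.3 (Example:4) of the paper: over a finite-dimensional algebra `Λ` over a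
field `k`, a left `Λ`-module `M` satisfies `Ext¹_Λ(M, Λ) = 0` if and only if
`Ext¹_Λ(M, Q) = 0` for every projective left `Λ`-module `Q`. -/
theorem stmt_13 (k : Type u) [Field k] (Λ : Type u) [Ring Λ] [Algebra k Λ]
    [FiniteDimensional k Λ] (M : ModuleCat.{u} Λ) :
    IsZero (((Ext ℤ (ModuleCat.{u} Λ) 1).obj (op M)).obj (ModuleCat.of Λ Λ)) ↔
      ∀ (Q : ModuleCat.{u} Λ), Projective Q →
        IsZero (((Ext ℤ (ModuleCat.{u} Λ) 1).obj (op M)).obj Q) := by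
  constructor
  · intro h Q hQ
    set P : ProjectiveResolution M := ProjectiveResolution.of M with hP
    rw [ext1_isZero_iff M _ P] at h ⊢
    intro φ hφ
    have hQ' : Module.Projective Λ Q :=
      (IsProjective.iff_projective (Q : Type u)).2 (Projective.of_iso (Iso.refl Q) hQ)
    have H : ∀ φ' : (P.complex.X 1 : Type u) →ₗ[Λ] Λ,
        φ'.comp (P.complex.d 2 1).hom = 0 →
        ∃ ψ' : (P.complex.X 0 : Type u) →ₗ[Λ] Λ,
          ψ'.comp (P.complex.d 1 0).hom = φ' := by
      intro φ' hφ'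
      obtain ⟨ψ, hψ⟩ := h (ModuleCat.ofHom φ') (by ext x; simpa using LinearMap.congr_fun hφ' x)
      exact ⟨ψ.hom, by ext x; simpa using congrArg (fun f => f.hom x) hψ⟩
    obtain ⟨ψ, hψ⟩ := key_lifting k Λ hQ' (P.complex.d 1 0).hom (P.complex.d 2 1).hom H φ.hom
      (by ext x; simpa using congrArg (fun f => f.hom x) hφ)
    exact ⟨ModuleCat.ofHom ψ, by ext x; simpa using LinearMap.congr_fun hψ x⟩
  · intro h
    refine h (ModuleCat.of Λ Λ) ?_
    exact (IsProjective.iff_projective Λ).1 inferInstance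
end
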